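/- arXiv:2503.19399 — 3 statements merged into one kernel-verified Lean document; each statement's English description precedes it below -/
import Mathlib

section
/- For all integers n ≥ 0 and i ≥ 1, ā_{2i}(8n + 6) ≡ 0 (mod 4). -/
/-- `fk k` is the infinite product `∏_{n ≥ 1} (1 - q^{k n})` in `ℤ[[q]]`, defined
coefficientwise via stable partial products. -/
noncomputable def fk (k : ℕ) : PowerSeries ℤ :=
  PowerSeries.mk fun n =>
    PowerSeries.coeff n
      (∏ m ∈ Finset.Icc 1 (n + 1), (1 - (PowerSeries.X : PowerSeries ℤ) ^ (k * m)))

/-- `a : ℕ → ℕ` is the generalized overcubic partition function `ā_c`, i.e.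
`(∑_{n≥0} ā_c(n) q^n) · f_1^2 · f_2^{2c} = f_2^3 · f_4^{c-1}` in `ℤ[[q]]`
(equivalently `∑_{n≥0} ā_c(n) q^n = f_4^{c-1}/(f_1^2 f_2^{2c-3})`). -/
def IsGenOvercubic (c : ℕ) (a : ℕ → ℕ) : Prop :=
  (PowerSeries.mk fun n => (a n : ℤ)) * (fk 1) ^ 2 * (fk 2) ^ (2 * c) =
    (fk 2) ^ 3 * (fk 4) ^ (c - 1)

/-!
Modulo 4, `(1 - x)² = (1 - x²)(1 + 2y)` whenever `(1 - x) y = x`, and `∏ (1 + 2aⱼ) = 1 + 2 ∑ aⱼ`.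
Applied to `x = q^{km}` this gives `f_k² ≡ f_{2k} (1 + 2 D(q^k))`, where `D(q) = ∑_{m,t ≥ 1} q^{mt}`
is the generating function of the divisor counts (the mod-4 shadow of Gauss's identity
`f_1² / f_2 = ∑ (-1)ᵏ q^{k²}`). Since `1 + 2D` squares to 1 mod 4, the defining identity for
`c = 2i` collapses to `∑ ā_{2i}(n) qⁿ ≡ (1 + 2D(q))(1 + 2D(q²)) ≡ 1 + 2D(q) + 2D(q²)`.
As `8n + 6` is neither a square nor twice a square, pairing `(m, t)` with `(t, m)` shows that
its coefficients in `D(q)` and `D(q²)` are even.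
-/

open PowerSeries Finset

section

variable {R : Type*} [CommRing R]

lemma one_sub_sq_eq_of_four_eq_zero (h4 : (4 : R) = 0) {x y : R} (hy : (1 - x) * y = x) :
    (1 - x) ^ 2 = (1 - x ^ 2) * (1 + 2 * y) := by
  linear_combination (-(2 * (1 + x))) * hy - x * h4

lemma prod_one_add_two_mul_of_four_eq_zero {ι : Type*} (h4 : (4 : R) = 0) (s : Finset ι)
    (a : ι → R) : ∏ j ∈ s, (1 + 2 * a j) = 1 + 2 * ∑ j ∈ s, a j := by
  classical
  induction s using Finset.induction with
  | empty => simp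
  | insert j s hj ih =>
    rw [prod_insert hj, sum_insert hj, ih]
    linear_combination a j * (∑ j ∈ s, a j) * h4

lemma one_add_two_mul_sq_of_four_eq_zero (h4 : (4 : R) = 0) (a : R) : (1 + 2 * a) ^ 2 = 1 := by
  linear_combination (a + a ^ 2) * h4

lemma one_sub_mul_sum_Icc_pow (x : R) (M : ℕ) :
    (1 - x) * ∑ t ∈ Icc 1 M, x ^ t = x - x ^ (M + 1) := by
  induction M with
  | zero => simp
  | succ M ih => rw [sum_Icc_succ_top (Nat.le_add_left 1 M), mul_add, ih]; ring

lemma eq_of_forall_mk_span_X_pow_eq {f g : R⟦X⟧}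
    (h : ∀ N, Ideal.Quotient.mk (Ideal.span {(X : R⟦X⟧) ^ (N + 1)}) f =
      Ideal.Quotient.mk (Ideal.span {(X : R⟦X⟧) ^ (N + 1)}) g) : f = g := by
  ext N
  have hdvd := Ideal.mem_span_singleton.mp (Ideal.Quotient.eq.mp (h N))
  simpa [sub_eq_zero] using X_pow_dvd_iff.mp hdvd N (Nat.lt_succ_self N)

variable (R) in
noncomputable def fkPartial (k M : ℕ) : R⟦X⟧ := ∏ m ∈ Icc 1 M, (1 - X ^ (k * m))

lemma fkPartial_succ (k M : ℕ) :
    fkPartial R k (M + 1) = fkPartial R k M * (1 - X ^ (k * (M + 1))) := by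
  rw [fkPartial, fkPartial, prod_Icc_succ_top (Nat.le_add_left 1 M)]

lemma coeff_fkPartial_of_le {k n M : ℕ} (hk : 0 < k) (h : n ≤ M) :
    coeff n (fkPartial R k M) = coeff n (fkPartial R k n) := by
  induction M, h using Nat.le_induction with
  | base => rfl
  | succ M hnM ih =>
    have hlt : ¬ k * (M + 1) ≤ n := by nlinarith
    rw [fkPartial_succ, mul_sub, mul_one, map_sub, coeff_mul_X_pow', if_neg hlt, sub_zero, ih]

lemma fk_eq_mk_coeff_fkPartial (k : ℕ) :
    fk k = mk fun n => coeff n (fkPartial ℤ k (n + 1)) := rfl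

lemma X_pow_dvd_fk_sub_fkPartial {k : ℕ} (hk : 0 < k) (M : ℕ) :
    (X : ℤ⟦X⟧) ^ (M + 1) ∣ fk k - fkPartial ℤ k M := by
  refine X_pow_dvd_iff.mpr fun n hn => ?_
  rw [map_sub, sub_eq_zero, fk_eq_mk_coeff_fkPartial, coeff_mk,
    coeff_fkPartial_of_le hk (Nat.le_succ n), coeff_fkPartial_of_le hk (Nat.le_of_lt_succ hn)]

lemma mk_map_fk {k : ℕ} (hk : 0 < k) (M : ℕ) :
    Ideal.Quotient.mk (Ideal.span {(X : R⟦X⟧) ^ (M + 1)}) ((fk k).map (Int.castRingHom R)) =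
      Ideal.Quotient.mk (Ideal.span {(X : R⟦X⟧) ^ (M + 1)}) (fkPartial R k M) := by
  refine Ideal.Quotient.eq.mpr (Ideal.mem_span_singleton.mpr ?_)
  have := map_dvd (map (Int.castRingHom R)) (X_pow_dvd_fk_sub_fkPartial hk M)
  simpa [fkPartial, map_prod] using this

lemma isUnit_map_fk {k : ℕ} (hk : 0 < k) : IsUnit ((fk k).map (Int.castRingHom R)) := by
  have h : coeff 0 (fk k) = 1 := by
    rw [fk_eq_mk_coeff_fkPartial, coeff_mk, fkPartial, coeff_zero_eq_constantCoeff_apply,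
      map_prod]
    refine prod_eq_one fun m hm => ?_
    have : k * m ≠ 0 := Nat.mul_ne_zero hk.ne' (Nat.one_le_iff_ne_zero.mp (mem_Icc.mp hm).1)
    simp [this]
  rw [isUnit_iff_constantCoeff, ← coeff_zero_eq_constantCoeff_apply, coeff_map, h, map_one]
  exact isUnit_one

def numFactorizations (k N : ℕ) : ℕ := #{p ∈ Icc 1 N ×ˢ Icc 1 N | k * p.1 * p.2 = N}

lemma even_numFactorizations {k N : ℕ} (h : ∀ m, k * m * m ≠ N) :
    Even (numFactorizations k N) := by
  rw [← ZMod.natCast_eq_zero_iff_even, numFactorizations, card_eq_sum_ones, Nat.cast_sum,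
    Nat.cast_one]
  refine sum_involution (fun p _ => p.swap) (fun _ _ => by decide) (fun p hp _ hswap => ?_)
    (fun p hp => ?_) (fun _ _ => rfl)
  · have hdiag : p.1 = p.2 := congrArg Prod.snd hswap
    exact h p.1 (by rw [← (mem_filter.mp hp).2, hdiag])
  · simp only [mem_filter, mem_product, Prod.fst_swap, Prod.snd_swap] at hp ⊢
    exact ⟨hp.1.symm, by rw [← hp.2]; ring⟩

variable (R) in
/-- `D(q^k)`, where `D(q) = ∑_{m,t ≥ 1} q^{mt} = ∑_{N ≥ 1} d(N) q^N`. -/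
noncomputable def divisorSeries (k : ℕ) : R⟦X⟧ := mk fun N => (numFactorizations k N : R)

lemma coeff_sum_sum_X_pow {k M N : ℕ} (hk : 0 < k) (hN : N ≤ M) :
    coeff N (∑ m ∈ Icc 1 M, ∑ t ∈ Icc 1 M, (X : R⟦X⟧) ^ (k * m * t)) =
      numFactorizations k N := by
  rw [← sum_product', map_sum]
  simp_rw [coeff_X_pow]
  rw [sum_boole, numFactorizations]
  congr 2
  ext ⟨m, t⟩
  simp only [mem_filter, mem_product, mem_Icc]
  refine ⟨fun ⟨⟨⟨hm, _⟩, ht, _⟩, hmt⟩ => ?_, fun ⟨⟨⟨hm, _⟩, ht, _⟩, hmt⟩ => ?_⟩ <;>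
  · have hpos : 0 < k * m * t := by positivity
    have hm' : m ≤ k * m * t := Nat.le_of_dvd hpos ⟨k * t, by ring⟩
    have ht' : t ≤ k * m * t := Nat.le_of_dvd hpos ⟨k * m, by ring⟩
    refine ⟨⟨⟨hm, ?_⟩, ht, ?_⟩, hmt.symm⟩ <;> omega

theorem map_fk_sq (h4 : (4 : R) = 0) {k : ℕ} (hk : 0 < k) :
    (fk k).map (Int.castRingHom R) ^ 2 =
      (fk (2 * k)).map (Int.castRingHom R) * (1 + 2 * divisorSeries R k) := by
  refine eq_of_forall_mk_span_X_pow_eq fun M => ?_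
  set π := Ideal.Quotient.mk (Ideal.span {(X : R⟦X⟧) ^ (M + 1)})
  have hπ4 : (4 : R⟦X⟧ ⧸ Ideal.span {(X : R⟦X⟧) ^ (M + 1)}) = 0 := by
    rw [← map_ofNat (π.comp C) 4, h4, map_zero]
  set y : ℕ → R⟦X⟧ := fun m => ∑ t ∈ Icc 1 M, X ^ (k * m * t)
  have hD : π (divisorSeries R k) = π (∑ m ∈ Icc 1 M, y m) := by
    refine Ideal.Quotient.eq.mpr (Ideal.mem_span_singleton.mpr (X_pow_dvd_iff.mpr fun N hN => ?_))
    rw [map_sub, sub_eq_zero, divisorSeries, coeff_mk,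
      coeff_sum_sum_X_pow hk (Nat.le_of_lt_succ hN)]
  have hfactor : ∀ m ∈ Icc 1 M,
      π (1 - X ^ (k * m)) ^ 2 = π (1 - X ^ (2 * k * m)) * (1 + 2 * π (y m)) := by
    intro m hm
    have hy : (1 - π (X ^ (k * m))) * π (y m) = π (X ^ (k * m)) := by
      have hvanish : π ((X ^ (k * m)) ^ (M + 1)) = 0 := by
        refine Ideal.Quotient.eq_zero_iff_mem.mpr (Ideal.mem_span_singleton.mpr ?_)
        have hX : (X : R⟦X⟧) ∣ X ^ (k * m) :=
          dvd_pow_self X (Nat.mul_ne_zero hk.ne' (Nat.one_le_iff_ne_zero.mp (mem_Icc.mp hm).1))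
        exact pow_dvd_pow_of_dvd hX (M + 1)
      simp_rw [y, pow_mul (X : R⟦X⟧) (k * m)]
      rw [← map_one π, ← map_sub, ← map_mul, one_sub_mul_sum_Icc_pow, map_sub, hvanish, sub_zero]
    rw [map_sub, map_one, one_sub_sq_eq_of_four_eq_zero hπ4 hy, ← map_pow, ← pow_mul,
      mul_comm (k * m), ← mul_assoc, map_sub, map_one]
  calc π ((fk k).map (Int.castRingHom R) ^ 2)
      = ∏ m ∈ Icc 1 M, π (1 - X ^ (k * m)) ^ 2 := by
        rw [map_pow, mk_map_fk hk, fkPartial, map_prod, prod_pow]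
    _ = (∏ m ∈ Icc 1 M, π (1 - X ^ (2 * k * m))) * ∏ m ∈ Icc 1 M, (1 + 2 * π (y m)) := by
        rw [prod_congr rfl hfactor, prod_mul_distrib]
    _ = π ((fk (2 * k)).map (Int.castRingHom R) * (1 + 2 * divisorSeries R k)) := by
        rw [prod_one_add_two_mul_of_four_eq_zero hπ4, ← map_sum, ← hD, ← map_prod, ← fkPartial,
          ← mk_map_fk (by omega), map_mul, map_add, map_mul, map_one, map_ofNat]

lemma map_mk_natCast (a : ℕ → ℕ) :
    (mk fun n => (a n : ℤ)).map (Int.castRingHom R) = mk fun n => (a n : R) := by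
  ext n
  simp [coeff_map]

theorem mk_eq_of_isGenOvercubic_of_four_eq_zero (h4 : (4 : R) = 0) {i : ℕ} (hi : 1 ≤ i)
    {a : ℕ → ℕ} (ha : IsGenOvercubic (2 * i) a) :
    (mk fun n => (a n : R)) = 1 + 2 * (divisorSeries R 1 + divisorSeries R 2) := by
  have h4' : (4 : R⟦X⟧) = 0 := by rw [← map_ofNat C 4, h4, map_zero]
  set F : ℕ → R⟦X⟧ := fun k => (fk k).map (Int.castRingHom R)
  set θ₁ := 1 + 2 * divisorSeries R 1
  set θ₂ := 1 + 2 * divisorSeries R 2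
  have hF₁ : F 1 ^ 2 = F 2 * θ₁ := map_fk_sq h4 one_pos
  have hF₂ : F 2 ^ 2 = F 4 * θ₂ := map_fk_sq h4 two_pos
  have hθ₁ : θ₁ ^ 2 = 1 := one_add_two_mul_sq_of_four_eq_zero h4' _
  have hθ₂ : θ₂ ^ 2 = 1 := one_add_two_mul_sq_of_four_eq_zero h4' _
  obtain ⟨j, rfl⟩ : ∃ j, i = j + 1 := ⟨i - 1, by omega⟩
  have hmapped := congrArg (map (Int.castRingHom R)) ha
  simp only [map_mul, map_pow, map_mk_natCast] at hmapped
  have hF₂pow : F 2 ^ (2 * (2 * (j + 1))) = F 4 ^ (2 * (j + 1)) := by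
    rw [pow_mul, hF₂, mul_pow, pow_mul θ₂, hθ₂, one_pow, mul_one]
  rw [hF₁, hF₂pow, show 2 * (j + 1) - 1 = 2 * j + 1 by omega] at hmapped
  have hu : IsUnit (F 2 * F 4 ^ (2 * (j + 1))) :=
    (isUnit_map_fk two_pos).mul ((isUnit_map_fk four_pos).pow _)
  have hcancel : (mk fun n => (a n : R)) * θ₁ = θ₂ :=
    hu.mul_right_cancel (by linear_combination hmapped + F 2 * F 4 ^ (2 * j + 1) * hF₂)
  linear_combination θ₁ * hcancel - (mk fun n => (a n : R)) * hθ₁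
    + divisorSeries R 1 * divisorSeries R 2 * h4'

end

lemma mul_self_mod_eight (m : ℕ) : m * m % 8 = 0 ∨ m * m % 8 = 1 ∨ m * m % 8 = 4 := by
  rw [Nat.mul_mod]
  have := Nat.mod_lt m (show 8 > 0 by norm_num)
  interval_cases m % 8 <;> simp

theorem stmt_5 (i : ℕ) (hi : 1 ≤ i) (ab : ℕ → ℕ) (hab : IsGenOvercubic (2 * i) ab)
    (n : ℕ) :
    ab (8 * n + 6) % 4 = 0 := by
  have hcoeff := congrArg (coeff (8 * n + 6))
    (mk_eq_of_isGenOvercubic_of_four_eq_zero (R := ZMod 4) (by decide) hi hab)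
  obtain ⟨c₁, hc₁⟩ := even_numFactorizations (k := 1) (N := 8 * n + 6) fun m h => by
    have := mul_self_mod_eight m; rw [one_mul] at h; omega
  obtain ⟨c₂, hc₂⟩ := even_numFactorizations (k := 2) (N := 8 * n + 6) fun m h => by
    have := mul_self_mod_eight m; rw [mul_assoc] at h; omega
  simp only [divisorSeries, two_mul, map_add, coeff_mk, coeff_one, hc₁, hc₂,
    if_neg (by omega : 8 * n + 6 ≠ 0)] at hcoeff
  have hcast : (ab (8 * n + 6) : ZMod 4) = ((4 * (c₁ + c₂) : ℕ) : ZMod 4) := by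
    rw [hcoeff]; push_cast; ring
  have := (ZMod.natCast_eq_natCast_iff' _ _ 4).mp hcast
  omega
end

section
/- For all integers n ≥ 0 and i ≥ 1, ā_{2i}(8n + 5) ≡ 0 (mod 4). -/
/-!
Modulo 4 every factor of `f_{2k}` splits as `1 - q^{2j} = (1 - q^j)^2 (1 + 2 q^j/(1 - q^j))`
with `j = km`, and since `4 = 0` the units `1 + 2u` multiply additively and square to `1`.
Hence `f_{2k} ≡ f_k^2 (1 + 2 D_k)`, where `D_k = ∑_{m ≥ 1} q^{km}/(1 - q^{km})` counts the `m`
with `km ∣ t`. For `c = 2i` this turns the defining identity into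
`∑ ā_c(t) q^t ≡ (1 + 2 D_1)(1 + 2 D_2) = 1 + 2 (D_1 + D_2) (mod 4)`. At `t = 8n + 5` the
coefficient of `D_2` vanishes because `t` is odd, and that of `D_1` is the number of divisors
of `t`, which is even because `t ≡ 5 (mod 8)` is not a square.
-/

namespace Overcubic

open PowerSeries Finset

noncomputable def partialProd (R : Type*) [CommRing R] (k N : ℕ) : R⟦X⟧ :=
  ∏ m ∈ Icc 1 N, (1 - X ^ (k * m))

noncomputable def lambertTerm (R : Type*) [CommRing R] (j : ℕ) : R⟦X⟧ :=
  mk fun t => if j ∣ t ∧ t ≠ 0 then 1 else 0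

noncomputable def lambertSeries (R : Type*) [CommRing R] (k : ℕ) : R⟦X⟧ :=
  mk fun t => (#{m ∈ Icc 1 t | k * m ∣ t} : R)

noncomputable def fkMod4 (k : ℕ) : (ZMod 4)⟦X⟧ :=
  map (Int.castRingHom (ZMod 4)) (fk k)

variable {R : Type*} [CommRing R]

lemma coeff_mul_one_sub_X_pow (f : R⟦X⟧) {n j : ℕ} (h : n < j) :
    coeff n (f * (1 - X ^ j)) = coeff n f := by
  rw [mul_sub, mul_one, map_sub, coeff_mul_X_pow', if_neg (by omega), sub_zero]

lemma coeff_partialProd {k n N : ℕ} (hk : 1 ≤ k) (hN : n ≤ N) :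
    coeff n (partialProd R k N) = coeff n (partialProd R k n) := by
  induction N, hN using Nat.le_induction with
  | base => rfl
  | succ N hN ih =>
    rw [partialProd, prod_Icc_succ_top (by omega), ← partialProd,
      coeff_mul_one_sub_X_pow _ (by nlinarith), ih]

lemma X_pow_dvd_fk_sub {k : ℕ} (hk : 1 ≤ k) (N : ℕ) :
    X ^ (N + 1) ∣ fk k - partialProd ℤ k N := by
  refine X_pow_dvd_iff.mpr fun n hn => ?_
  rw [map_sub, sub_eq_zero, fk, coeff_mk]
  change coeff n (partialProd ℤ k (n + 1)) = _
  rw [coeff_partialProd hk n.le_succ, coeff_partialProd hk (by omega : n ≤ N)]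

lemma constantCoeff_fk {k : ℕ} (hk : 1 ≤ k) : constantCoeff (fk k) = 1 := by
  have h := X_pow_dvd_iff.mp (X_pow_dvd_fk_sub hk 0) 0 Nat.one_pos
  rwa [map_sub, sub_eq_zero, partialProd, Icc_eq_empty (by omega), prod_empty, coeff_one,
    if_pos rfl, coeff_zero_eq_constantCoeff_apply] at h

lemma X_pow_dvd_fkMod4_sub {k : ℕ} (hk : 1 ≤ k) (N : ℕ) :
    X ^ (N + 1) ∣ fkMod4 k - partialProd (ZMod 4) k N := by
  simpa [fkMod4, partialProd, map_prod] using
    map_dvd (map (Int.castRingHom (ZMod 4))) (X_pow_dvd_fk_sub hk N)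

lemma isUnit_fkMod4 {k : ℕ} (hk : 1 ≤ k) : IsUnit (fkMod4 k) :=
  (isUnit_iff_constantCoeff.mpr (by rw [constantCoeff_fk hk]; exact isUnit_one)).map _

lemma lambertTerm_mul_one_sub_X_pow {j : ℕ} (hj : 1 ≤ j) :
    lambertTerm R j * (1 - X ^ j) = X ^ j := by
  ext t
  rw [mul_sub, mul_one, map_sub, coeff_mul_X_pow', coeff_X_pow]
  simp only [lambertTerm, coeff_mk]
  rcases lt_trichotomy t j with h | rfl | h
  · have : ¬ (j ∣ t ∧ t ≠ 0) := fun ⟨hd, h0⟩ =>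
      absurd (Nat.le_of_dvd (by omega) hd) (by omega)
    simp [this, h.ne, h.not_ge]
  · simp [show t ≠ 0 by omega]
  · simp [h.le, Nat.dvd_sub_self_right, h.not_ge, h.ne', show t ≠ 0 by omega,
      show t - j ≠ 0 by omega]

lemma one_sub_X_pow_sq_mul {j : ℕ} (hj : 1 ≤ j) :
    (1 - X ^ j) ^ 2 * (1 + 2 * lambertTerm R j) = 1 - X ^ (2 * j) := by
  linear_combination (2 * (1 - X ^ j)) * lambertTerm_mul_one_sub_X_pow (R := R) hj

lemma partialProd_sq_mul_prod {k : ℕ} (hk : 1 ≤ k) (N : ℕ) :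
    partialProd R k N ^ 2 * ∏ m ∈ Icc 1 N, (1 + 2 * lambertTerm R (k * m)) =
      partialProd R (2 * k) N := by
  rw [partialProd, partialProd, ← prod_pow, ← prod_mul_distrib]
  refine prod_congr rfl fun m hm => ?_
  rw [mul_assoc, one_sub_X_pow_sq_mul (Nat.mul_pos hk (mem_Icc.mp hm).1)]

lemma X_pow_dvd_lambertSeries_sub_sum {k : ℕ} (hk : 1 ≤ k) (N : ℕ) :
    X ^ (N + 1) ∣ lambertSeries R k - ∑ m ∈ Icc 1 N, lambertTerm R (k * m) := by
  refine X_pow_dvd_iff.mpr fun t ht => ?_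
  simp only [map_sub, map_sum, lambertSeries, lambertTerm, coeff_mk, sum_boole, sub_eq_zero]
  congr 2
  ext m
  simp only [mem_filter, mem_Icc]
  constructor
  · rintro ⟨⟨hm, hmt⟩, hdvd⟩
    exact ⟨⟨hm, by omega⟩, hdvd, by omega⟩
  · rintro ⟨⟨hm, -⟩, hdvd, ht0⟩
    have := Nat.le_of_dvd (Nat.pos_of_ne_zero ht0) hdvd
    exact ⟨⟨hm, by nlinarith⟩, hdvd⟩

lemma coeff_lambertSeries_one (t : ℕ) : coeff t (lambertSeries R 1) = #t.divisors := by
  rw [lambertSeries, coeff_mk, Nat.divisors]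
  simp only [one_mul, Finset.Ico_add_one_right_eq_Icc]

lemma coeff_lambertSeries_of_not_dvd {k t : ℕ} (h : ¬ k ∣ t) :
    coeff t (lambertSeries R k) = 0 := by
  rw [lambertSeries, coeff_mk, filter_false_of_mem fun m _ hm => h (dvd_of_mul_right_dvd hm),
    card_empty, Nat.cast_zero]

lemma prod_one_add_two_mul {ι : Type*} (h4 : (4 : R) = 0) (s : Finset ι) (a : ι → R) :
    ∏ i ∈ s, (1 + 2 * a i) = 1 + 2 * ∑ i ∈ s, a i := by
  induction s using Finset.cons_induction with
  | empty => simp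
  | cons i s hi ih =>
    rw [prod_cons, sum_cons, ih]
    linear_combination (a i * ∑ i ∈ s, a i) * h4

lemma four_eq_zero : (4 : (ZMod 4)⟦X⟧) = 0 := by
  rw [← map_ofNat C 4, show (4 : ZMod 4) = 0 from rfl, map_zero]

theorem fkMod4_sq_mul {k : ℕ} (hk : 1 ≤ k) :
    fkMod4 k ^ 2 * (1 + 2 * lambertSeries (ZMod 4) k) = fkMod4 (2 * k) := by
  ext n
  set D := lambertSeries (ZMod 4) k
  set P := partialProd (ZMod 4) k n
  set S := ∑ m ∈ Icc 1 n, lambertTerm (ZMod 4) (k * m)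
  have hfin : P ^ 2 * (1 + 2 * S) = partialProd (ZMod 4) (2 * k) n := by
    rw [← prod_one_add_two_mul four_eq_zero, partialProd_sq_mul_prod hk]
  have hdvd : X ^ (n + 1) ∣ fkMod4 k ^ 2 * (1 + 2 * D) - fkMod4 (2 * k) := by
    have e : fkMod4 k ^ 2 * (1 + 2 * D) - fkMod4 (2 * k) =
        (fkMod4 k - P) * ((fkMod4 k + P) * (1 + 2 * D)) + (D - S) * (2 * P ^ 2) -
          (fkMod4 (2 * k) - partialProd (ZMod 4) (2 * k) n) := by
      linear_combination hfin
    rw [e]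
    exact (((X_pow_dvd_fkMod4_sub hk n).mul_right _).add
      ((X_pow_dvd_lambertSeries_sub_sum hk n).mul_right _)).sub
      (X_pow_dvd_fkMod4_sub (by omega) n)
  exact sub_eq_zero.mp (X_pow_dvd_iff.mp hdvd n n.lt_succ_self)

theorem genOvercubic_mod_four {i : ℕ} (hi : 1 ≤ i) {a : ℕ → ℕ}
    (ha : IsGenOvercubic (2 * i) a) :
    map (Int.castRingHom (ZMod 4)) (mk fun n => (a n : ℤ)) =
      1 + 2 * (lambertSeries (ZMod 4) 1 + lambertSeries (ZMod 4) 2) := by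
  obtain ⟨j, rfl⟩ : ∃ j, i = j + 1 := ⟨i - 1, by omega⟩
  set A := map (Int.castRingHom (ZMod 4)) (mk fun n => (a n : ℤ))
  obtain ⟨u₁, hu₁⟩ : ∃ u, u = 1 + 2 * lambertSeries (ZMod 4) 1 := ⟨_, rfl⟩
  obtain ⟨u₂, hu₂⟩ : ∃ u, u = 1 + 2 * lambertSeries (ZMod 4) 2 := ⟨_, rfl⟩
  have hA : A * fkMod4 1 ^ 2 * fkMod4 2 ^ (4 * j + 4) =
      fkMod4 2 ^ 3 * fkMod4 4 ^ (2 * j + 1) := by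
    have := congrArg (map (Int.castRingHom (ZMod 4))) ha
    simp only [map_mul, map_pow] at this
    rwa [show 2 * (2 * (j + 1)) = 4 * j + 4 by omega,
      show 2 * (j + 1) - 1 = 2 * j + 1 by omega] at this
  have h₁ : fkMod4 1 ^ 2 * u₁ = fkMod4 2 := hu₁ ▸ fkMod4_sq_mul le_rfl
  have h₂ : fkMod4 2 ^ 2 * u₂ = fkMod4 4 := hu₂ ▸ fkMod4_sq_mul one_le_two
  have hu₂_sq : u₂ ^ 2 = 1 := by
    rw [hu₂]
    linear_combination
      (lambertSeries (ZMod 4) 2 + lambertSeries (ZMod 4) 2 ^ 2) * four_eq_zero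
  have key : fkMod4 2 ^ (4 * j + 5) * A = fkMod4 2 ^ (4 * j + 5) * (u₁ * u₂) := by
    calc fkMod4 2 ^ (4 * j + 5) * A = A * fkMod4 1 ^ 2 * fkMod4 2 ^ (4 * j + 4) * u₁ := by
          linear_combination (-(A * fkMod4 2 ^ (4 * j + 4))) * h₁
      _ = fkMod4 2 ^ 3 * (fkMod4 2 ^ 2 * u₂) ^ (2 * j + 1) * u₁ := by rw [hA, h₂]
      _ = fkMod4 2 ^ (4 * j + 5) * (u₂ ^ 2) ^ j * (u₁ * u₂) := by ring
      _ = fkMod4 2 ^ (4 * j + 5) * (u₁ * u₂) := by rw [hu₂_sq, one_pow, mul_one]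
  rw [((isUnit_fkMod4 (by norm_num)).pow _).mul_left_cancel key, hu₁, hu₂]
  linear_combination (lambertSeries (ZMod 4) 1 * lambertSeries (ZMod 4) 2) * four_eq_zero

lemma even_card_divisors {n : ℕ} (hn : ¬ IsSquare n) : Even #n.divisors := by
  rw [← ZMod.natCast_eq_zero_iff_even, card_eq_sum_ones, Nat.cast_sum, Nat.cast_one]
  refine sum_involution (fun d _ => n / d) (fun _ _ => rfl) ?_ ?_ ?_
  · intro d hd _ hdd
    exact hn ⟨d, (Nat.div_mul_cancel (Nat.dvd_of_mem_divisors hd)).symm.trans (by rw [hdd])⟩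
  · intro d hd
    exact Nat.mem_divisors.mpr
      ⟨Nat.div_dvd_of_dvd (Nat.dvd_of_mem_divisors hd), (Nat.mem_divisors.mp hd).2⟩
  · intro d hd
    exact Nat.div_div_self (Nat.dvd_of_mem_divisors hd) (Nat.mem_divisors.mp hd).2

lemma not_isSquare_eight_mul_add_five (n : ℕ) : ¬ IsSquare (8 * n + 5) := by
  rintro ⟨r, hr⟩
  have h := congrArg (Nat.cast : ℕ → ZMod 8) hr
  push_cast at h
  have no_root : ∀ x : ZMod 8, x * x ≠ 5 := by decide
  exact no_root r (by simpa [show (8 : ZMod 8) = 0 from rfl] using h.symm)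

end Overcubic

open Overcubic PowerSeries in
theorem stmt_6 (i : ℕ) (hi : 1 ≤ i) (ab : ℕ → ℕ) (hab : IsGenOvercubic (2 * i) ab)
    (n : ℕ) :
    ab (8 * n + 5) % 4 = 0 := by
  have hodd : ¬ 2 ∣ 8 * n + 5 := by omega
  have h := congrArg (coeff (8 * n + 5)) (genOvercubic_mod_four hi hab)
  rw [coeff_map, coeff_mk, map_add, coeff_one, if_neg (by omega), ← map_ofNat C 2, coeff_C_mul,
    map_add, coeff_lambertSeries_one, coeff_lambertSeries_of_not_dvd hodd] at h
  obtain ⟨r, hr⟩ := even_card_divisors (not_isSquare_eight_mul_add_five n)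
  have hzero : ((ab (8 * n + 5) : ℕ) : ZMod 4) = 0 := by
    have hfour : (4 : ZMod 4) = 0 := rfl
    rw [← Int.cast_natCast, ← eq_intCast (Int.castRingHom (ZMod 4)), h, hr]
    push_cast
    linear_combination (r : ZMod 4) * hfour
  exact Nat.mod_eq_zero_of_dvd ((ZMod.natCast_eq_zero_iff _ 4).mp hzero)
end

section
/- For all integers n ≥ 0, i ≥ 1, and α ≥ 0, ā_{2i}(2^α · (4n + 3)) ≡ 0 (mod 4). -/
/-!
Gauss's identity `f₁² = f₂ · θ`, where `θ = ∑_{j ∈ ℤ} (-1)^j q^{j²} = 1 + 2ψ` and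
`ψ = ∑_{t ≥ 1} (-1)^t q^{t²}`, is the limit `N → ∞` of its finite form
`∏_{m<N} (1 - q^{2m+1})² = ∑_{k ≤ 2N} (-1)^{N+k} q^{(k-N)²} [2N, k]_{q²}`, which follows by
induction on `N` from the two Pascal rules for Gaussian binomials. Substituting `q ↦ q²` gives
`f₂² = f₄ · θ(q²)`. Modulo 4 we have `θ² = (1 + 2ψ)² ≡ 1`, and every `f_k` is a unit, so the
relation defining `ā_{2i}` collapses to `∑ ā_{2i}(n) qⁿ ≡ θ(q) θ(q²) (mod 4)`. At `m ≠ 0` the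
coefficient of `(1 + 2ψ(q)) (1 + 2ψ(q²))` is `2 (ψ_m + ψ_{m/2})` modulo 4, and both terms vanish
because `2^α (4n + 3)` is neither a square nor twice a square.
-/
open PowerSeries Finset

section Truncation

variable {R : Type*} [CommRing R]

theorem smodEq_X_pow_iff {n : ℕ} {F G : PowerSeries R} :
    F ≡ G [SMOD Ideal.span {X ^ n}] ↔ ∀ m < n, coeff m F = coeff m G := by
  simp only [SModEq.sub_mem, Ideal.mem_span_singleton, X_pow_dvd_iff, map_sub, sub_eq_zero]

theorem eq_of_forall_smodEq_X_pow {F G : PowerSeries R}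
    (h : ∀ n, F ≡ G [SMOD Ideal.span {X ^ n}]) : F = G :=
  ext fun m => smodEq_X_pow_iff.1 (h (m + 1)) m m.lt_succ_self

theorem SModEq.of_X_pow_le {m n : ℕ} {F G : PowerSeries R}
    (h : F ≡ G [SMOD Ideal.span {X ^ n}]) (hmn : m ≤ n) : F ≡ G [SMOD Ideal.span {X ^ m}] :=
  h.mono (Ideal.span_singleton_le_span_singleton.2 (pow_dvd_pow X hmn))

theorem SModEq.X_pow_mul {e n : ℕ} {F G : PowerSeries R}
    (h : F ≡ G [SMOD Ideal.span {X ^ n}]) :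
    X ^ e * F ≡ X ^ e * G [SMOD Ideal.span {X ^ (e + n)}] := by
  rw [SModEq.sub_mem, Ideal.mem_span_singleton, ← mul_sub, pow_add] at *
  exact mul_dvd_mul_left _ h

theorem SModEq.expand {p n : ℕ} (hp : p ≠ 0) {F G : PowerSeries R}
    (h : F ≡ G [SMOD Ideal.span {X ^ n}]) :
    PowerSeries.expand p hp F ≡ PowerSeries.expand p hp G [SMOD Ideal.span {X ^ (p * n)}] := by
  rw [SModEq.sub_mem, Ideal.mem_span_singleton] at *
  simpa [pow_mul, ← map_sub] using map_dvd (PowerSeries.expand p hp) h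

theorem mul_one_sub_X_pow_smodEq {n j : ℕ} (F : PowerSeries R) (hj : n ≤ j) :
    F * (1 - X ^ j) ≡ F [SMOD Ideal.span {X ^ n}] := by
  rw [SModEq.sub_mem, Ideal.mem_span_singleton]
  refine ⟨-(X ^ (j - n) * F), ?_⟩
  rw [mul_neg, ← mul_assoc, ← pow_add, Nat.add_sub_cancel' hj]
  ring

theorem prod_one_sub_X_pow_smodEq_one {n : ℕ} (s : Finset ℕ) (e : ℕ → ℕ)
    (he : ∀ i ∈ s, n ≤ e i) :
    ∏ i ∈ s, (1 - X ^ e i : PowerSeries R) ≡ 1 [SMOD Ideal.span {X ^ n}] := by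
  simpa using SModEq.prod fun i hi => (mul_one_sub_X_pow_smodEq (1 : PowerSeries R) (he i hi))

end Truncation

section QPochhammer

variable {R : Type*} [CommRing R]

def qPochhammer (q : R) (n : ℕ) : R := ∏ m ∈ range n, (1 - q ^ (m + 1))

theorem qPochhammer_zero (q : R) : qPochhammer q 0 = 1 := prod_range_zero _

theorem qPochhammer_succ (q : R) (n : ℕ) :
    qPochhammer q (n + 1) = qPochhammer q n * (1 - q ^ (n + 1)) :=
  prod_range_succ _ _

theorem qPochhammer_mul_prod_Ico (q : R) {m n : ℕ} (h : m ≤ n) :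
    qPochhammer q m * ∏ j ∈ Ico m n, (1 - q ^ (j + 1)) = qPochhammer q n :=
  prod_range_mul_prod_Ico _ h

theorem constantCoeff_qPochhammer_X_pow {k : ℕ} (hk : k ≠ 0) (n : ℕ) :
    constantCoeff (qPochhammer (X ^ k : PowerSeries R) n) = 1 := by
  simp [qPochhammer, map_prod, ← pow_mul, hk]

theorem qPochhammer_X_pow_smodEq {k m n : ℕ} (hk : k ≠ 0) (hmn : m ≤ n) :
    qPochhammer (X ^ k : PowerSeries R) n ≡ qPochhammer (X ^ k) m
      [SMOD Ideal.span {X ^ (m + 1)}] := by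
  rw [← qPochhammer_mul_prod_Ico _ hmn]
  have hprod := prod_one_sub_X_pow_smodEq_one (R := R) (n := m + 1) (Ico m n)
    (fun j => k * (j + 1)) fun j hj => by nlinarith [(mem_Ico.1 hj).1, Nat.one_le_iff_ne_zero.2 hk]
  simpa [pow_mul] using (SModEq.refl (qPochhammer (X ^ k : PowerSeries R) m)).mul hprod

theorem qPochhammer_two_mul (q : R) (N : ℕ) :
    qPochhammer q (2 * N) = (∏ m ∈ range N, (1 - q ^ (2 * m + 1))) * qPochhammer (q ^ 2) N := by
  induction N with
  | zero => simp [qPochhammer_zero]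
  | succ N ih =>
    rw [show 2 * (N + 1) = 2 * N + 1 + 1 by ring, qPochhammer_succ, qPochhammer_succ, ih,
      prod_range_succ, qPochhammer_succ, ← pow_mul]
    ring_nf

theorem expand_qPochhammer_X_pow (p : ℕ) (hp : p ≠ 0) (k n : ℕ) :
    expand p hp (qPochhammer (X ^ k : PowerSeries R) n) = qPochhammer (X ^ (p * k)) n := by
  simp [qPochhammer, map_prod, ← pow_mul, mul_assoc]

end QPochhammer

theorem coeff_fk (k m : ℕ) : coeff m (fk k) = coeff m (qPochhammer (X ^ k) (m + 1)) := by
  rw [fk, coeff_mk, qPochhammer, ← Ico_add_one_right_eq_Icc, prod_Ico_eq_prod_range]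
  simp [← pow_mul, add_comm]

theorem fk_smodEq {k : ℕ} (hk : k ≠ 0) (n : ℕ) :
    fk k ≡ qPochhammer (X ^ k) n [SMOD Ideal.span {X ^ n}] := by
  refine smodEq_X_pow_iff.2 fun m hm => ?_
  rw [coeff_fk]
  exact (smodEq_X_pow_iff.1 (qPochhammer_X_pow_smodEq hk hm) m (by omega)).symm

theorem isUnit_fk {k : ℕ} (hk : k ≠ 0) : IsUnit (fk k) := by
  rw [isUnit_iff_constantCoeff, ← coeff_zero_eq_constantCoeff_apply, coeff_fk,
    coeff_zero_eq_constantCoeff_apply, constantCoeff_qPochhammer_X_pow hk]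
  exact isUnit_one

theorem expand_fk {k : ℕ} (hk : k ≠ 0) : expand 2 two_ne_zero (fk k) = fk (2 * k) := by
  refine eq_of_forall_smodEq_X_pow fun n => ?_
  have h := (fk_smodEq hk n).expand two_ne_zero
  rw [expand_qPochhammer_X_pow] at h
  exact (h.of_X_pow_le (by omega)).trans (fk_smodEq (by omega) n).symm

section QBinomial

variable {R : Type*} [CommRing R] (q : R)

def qBinomial (q : R) : ℕ → ℕ → R
  | _, 0 => 1
  | 0, _ + 1 => 0
  | n + 1, k + 1 => qBinomial q n (k + 1) + q ^ (n - k) * qBinomial q n k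

@[simp]
theorem qBinomial_zero_right (n : ℕ) : qBinomial q n 0 = 1 := by cases n <;> rfl

theorem qBinomial_succ_succ (n k : ℕ) :
    qBinomial q (n + 1) (k + 1) = qBinomial q n (k + 1) + q ^ (n - k) * qBinomial q n k :=
  rfl

theorem qBinomial_eq_zero_of_lt {n k : ℕ} (h : n < k) : qBinomial q n k = 0 := by
  induction n generalizing k with
  | zero => obtain ⟨k, rfl⟩ := Nat.exists_eq_add_one_of_ne_zero h.ne'; rfl
  | succ n ih =>
    obtain ⟨k, rfl⟩ := Nat.exists_eq_add_one_of_ne_zero (by omega : k ≠ 0)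
    rw [qBinomial_succ_succ, ih (by omega), ih (by omega), mul_zero, add_zero]

@[simp]
theorem qBinomial_self (n : ℕ) : qBinomial q n n = 1 := by
  induction n with
  | zero => rfl
  | succ n ih => simp [qBinomial_succ_succ, qBinomial_eq_zero_of_lt q n.lt_succ_self, ih]

theorem qBinomial_mul_qPochhammer {n k : ℕ} (h : k ≤ n) :
    qBinomial q n k * (qPochhammer q k * qPochhammer q (n - k)) = qPochhammer q n := by
  induction n generalizing k with
  | zero => simp [Nat.le_zero.1 h, qPochhammer_zero]
  | succ n ih =>
    obtain _ | k := k
    · simp [qPochhammer_zero]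
    obtain hk | rfl := Nat.lt_or_eq_of_le (Nat.le_of_succ_le_succ h)
    · have h₁ := ih hk
      have h₂ := ih hk.le
      obtain ⟨d, rfl⟩ := Nat.exists_eq_add_of_lt hk
      rw [show k + d + 1 - (k + 1) = d by omega, qPochhammer_succ] at h₁
      rw [show k + d + 1 - k = d + 1 by omega, qPochhammer_succ q d] at h₂
      rw [qBinomial_succ_succ, show k + d + 1 + 1 - (k + 1) = d + 1 by omega,
        show k + d + 1 - k = d + 1 by omega, qPochhammer_succ q (k + d + 1), qPochhammer_succ q k,
        qPochhammer_succ q d]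
      linear_combination (1 - q ^ (d + 1)) * h₁ + q ^ (d + 1) * (1 - q ^ (k + 1)) * h₂
    · simp [qPochhammer_zero]

theorem one_sub_pow_mul_qBinomial_succ [IsDomain R] (hq : ∀ n, qPochhammer q n ≠ 0) (n k : ℕ) :
    (1 - q ^ (k + 1)) * qBinomial q n (k + 1) = (1 - q ^ (n - k)) * qBinomial q n k := by
  obtain hk | rfl | hk := lt_trichotomy k n
  · have h₁ := qBinomial_mul_qPochhammer q hk
    have h₂ := qBinomial_mul_qPochhammer q hk.le
    obtain ⟨d, rfl⟩ := Nat.exists_eq_add_of_lt hk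
    rw [show k + d + 1 - (k + 1) = d by omega, qPochhammer_succ] at h₁
    rw [show k + d + 1 - k = d + 1 by omega, qPochhammer_succ q d] at h₂
    rw [show k + d + 1 - k = d + 1 by omega]
    refine mul_left_cancel₀ (mul_ne_zero (hq k) (hq d)) ?_
    linear_combination h₁ - h₂
  · simp [qBinomial_eq_zero_of_lt q k.lt_succ_self]
  · simp [qBinomial_eq_zero_of_lt q hk, qBinomial_eq_zero_of_lt q (hk.trans k.lt_succ_self)]

theorem qBinomial_succ_succ' [IsDomain R] (hq : ∀ n, qPochhammer q n ≠ 0) (n k : ℕ) :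
    qBinomial q (n + 1) (k + 1) = q ^ (k + 1) * qBinomial q n (k + 1) + qBinomial q n k := by
  rw [qBinomial_succ_succ]
  linear_combination one_sub_pow_mul_qBinomial_succ q hq n k

theorem qBinomial_symm [IsDomain R] (hq : ∀ n, qPochhammer q n ≠ 0) {n k : ℕ} (hk : k ≤ n) :
    qBinomial q n (n - k) = qBinomial q n k := by
  refine mul_right_cancel₀ (mul_ne_zero (hq k) (hq (n - k))) ?_
  have h := qBinomial_mul_qPochhammer q (Nat.sub_le n k)
  rw [Nat.sub_sub_self hk] at h
  linear_combination h - qBinomial_mul_qPochhammer q hk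

theorem qBinomial_two_mul_mul_qPochhammer [IsDomain R] (hq : ∀ n, qPochhammer q n ≠ 0)
    {N k : ℕ} (hk : k ≤ N) :
    qBinomial q (2 * N) k * qPochhammer q N =
      (∏ j ∈ Ico k N, (1 - q ^ (j + 1))) * ∏ j ∈ Ico (2 * N - k) (2 * N), (1 - q ^ (j + 1)) := by
  refine mul_right_cancel₀ (mul_ne_zero (hq k) (hq (2 * N - k))) ?_
  linear_combination
    qPochhammer q N * qBinomial_mul_qPochhammer q (n := 2 * N) (k := k) (by omega)
    - (qPochhammer q (2 * N - k) * ∏ j ∈ Ico (2 * N - k) (2 * N), (1 - q ^ (j + 1))) *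
      qPochhammer_mul_prod_Ico q hk
    - qPochhammer q N * qPochhammer_mul_prod_Ico q (Nat.sub_le (2 * N) k)

theorem sum_mul_qBinomial_succ (c : ℕ → R) (n : ℕ) :
    ∑ k ∈ range (n + 2), c k * qBinomial q (n + 1) k =
      ∑ k ∈ range (n + 1), (c k + q ^ (n - k) * c (k + 1)) * qBinomial q n k := by
  have hlast : c (n + 1) * qBinomial q n (n + 1) = 0 := by
    rw [qBinomial_eq_zero_of_lt q n.lt_succ_self, mul_zero]
  simp only [sum_range_succ' _ (n + 1), qBinomial_succ_succ, qBinomial_zero_right, add_mul,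
    mul_add, sum_add_distrib]
  rw [sum_range_succ (fun k => c (k + 1) * qBinomial q n (k + 1)), hlast,
    sum_range_succ' (fun k => c k * qBinomial q n k)]
  simp only [qBinomial_zero_right, mul_one, add_zero, mul_left_comm (c _), mul_assoc]
  ring

theorem sum_mul_qBinomial_succ' [IsDomain R] (hq : ∀ n, qPochhammer q n ≠ 0) (c : ℕ → R)
    (n : ℕ) :
    ∑ k ∈ range (n + 2), c k * qBinomial q (n + 1) k =
      ∑ k ∈ range (n + 1), (q ^ k * c k + c (k + 1)) * qBinomial q n k := by
  have hlast : c (n + 1) * qBinomial q n (n + 1) = 0 := by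
    rw [qBinomial_eq_zero_of_lt q n.lt_succ_self, mul_zero]
  simp only [sum_range_succ' _ (n + 1), qBinomial_succ_succ' q hq, qBinomial_zero_right, add_mul,
    mul_add, sum_add_distrib]
  rw [← add_zero (∑ k ∈ range (n + 1), q ^ k * c k * qBinomial q n k), ← mul_zero (q ^ (n + 1)),
    ← hlast, ← mul_assoc, ← sum_range_succ (fun k => q ^ k * c k * qBinomial q n k),
    sum_range_succ' (fun k => q ^ k * c k * qBinomial q n k) (n + 1)]
  simp only [qBinomial_zero_right, mul_one, pow_zero, one_mul, mul_left_comm (c _), mul_assoc]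
  ring

end QBinomial

section FiniteGauss

variable {R : Type*} [CommRing R] (q : R)

def thetaTerm (N k : ℕ) : R := (-1) ^ (N + k) * q ^ (((k : ℤ) - N).natAbs ^ 2)

def thetaBinomSum (N : ℕ) : R :=
  ∑ k ∈ range (2 * N + 1), thetaTerm q N k * qBinomial (q ^ 2) (2 * N) k

theorem thetaTerm_succ_succ (N k : ℕ) : thetaTerm q (N + 1) (k + 1) = thetaTerm q N k := by
  simp only [thetaTerm, show ((k + 1 : ℕ) : ℤ) - (N + 1 : ℕ) = (k : ℤ) - N by push_cast; ring]
  ring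

theorem thetaTerm_add_pow_mul_thetaTerm_succ {N k : ℕ} (hk : k ≤ 2 * N + 1) :
    thetaTerm q (N + 1) k + (q ^ 2) ^ (2 * N + 1 - k) * thetaTerm q (N + 1) (k + 1) =
      (1 - q ^ (2 * N + 1)) * thetaTerm q (N + 1) k := by
  have hexp : (((k + 1 : ℕ) : ℤ) - (N + 1 : ℕ)).natAbs ^ 2 + 2 * (2 * N + 1 - k) =
      (((k : ℕ) : ℤ) - (N + 1 : ℕ)).natAbs ^ 2 + (2 * N + 1) := by
    zify [hk]
    simp only [sq_abs]
    ring
  simp only [thetaTerm]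
  linear_combination -(-1) ^ (N + 1 + k) * congrArg (q ^ ·) hexp

theorem pow_mul_thetaTerm_add_thetaTerm_succ (N k : ℕ) :
    (q ^ 2) ^ k * thetaTerm q (N + 1) k + thetaTerm q (N + 1) (k + 1) =
      (1 - q ^ (2 * N + 1)) * thetaTerm q N k := by
  have hexp : (((k : ℕ) : ℤ) - (N + 1 : ℕ)).natAbs ^ 2 + 2 * k =
      (((k : ℕ) : ℤ) - N).natAbs ^ 2 + (2 * N + 1) := by
    zify
    simp only [sq_abs]
    ring
  rw [thetaTerm_succ_succ]
  simp only [thetaTerm]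
  linear_combination -(-1) ^ (N + k) * congrArg (q ^ ·) hexp

theorem sum_thetaTerm (N : ℕ) :
    ∑ k ∈ range (2 * N + 1), thetaTerm q N k =
      1 + 2 * ∑ t ∈ Icc 1 N, (-1) ^ t * q ^ (t ^ 2) := by
  induction N with
  | zero => simp [thetaTerm]
  | succ N ih =>
    rw [show 2 * (N + 1) + 1 = 2 * N + 1 + 1 + 1 by ring, sum_range_succ, sum_range_succ',
      sum_congr rfl fun k _ => thetaTerm_succ_succ q N k, ih, sum_Icc_succ_top (by omega)]
    have h₀ : (((0 : ℕ) : ℤ) - (N + 1 : ℕ)).natAbs = N + 1 := by omega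
    have h₁ : (((2 * N + 2 : ℕ) : ℤ) - (N + 1 : ℕ)).natAbs = N + 1 := by omega
    simp only [thetaTerm, h₀, h₁, show N + 1 + (2 * N + 2) = N + 1 + 2 * (N + 1) by ring,
      pow_add, pow_mul, neg_one_sq, one_pow]
    ring

variable [IsDomain R]

theorem thetaBinomSum_succ (hq : ∀ n, qPochhammer (q ^ 2) n ≠ 0) (N : ℕ) :
    thetaBinomSum q (N + 1) = (1 - q ^ (2 * N + 1)) ^ 2 * thetaBinomSum q N := by
  have hA : ∑ k ∈ range (2 * N + 2), (thetaTerm q (N + 1) k +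
        (q ^ 2) ^ (2 * N + 1 - k) * thetaTerm q (N + 1) (k + 1)) *
          qBinomial (q ^ 2) (2 * N + 1) k =
      (1 - q ^ (2 * N + 1)) *
        ∑ k ∈ range (2 * N + 2), thetaTerm q (N + 1) k * qBinomial (q ^ 2) (2 * N + 1) k := by
    rw [mul_sum]
    refine sum_congr rfl fun k hk => ?_
    rw [thetaTerm_add_pow_mul_thetaTerm_succ q (by simpa [Nat.lt_succ_iff] using hk), mul_assoc]
  have hB : ∑ k ∈ range (2 * N + 1), ((q ^ 2) ^ k * thetaTerm q (N + 1) k +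
        thetaTerm q (N + 1) (k + 1)) * qBinomial (q ^ 2) (2 * N) k =
      (1 - q ^ (2 * N + 1)) * thetaBinomSum q N := by
    rw [thetaBinomSum, mul_sum]
    refine sum_congr rfl fun k _ => ?_
    rw [pow_mul_thetaTerm_add_thetaTerm_succ, mul_assoc]
  rw [thetaBinomSum, show 2 * (N + 1) + 1 = 2 * N + 1 + 2 by ring,
    show 2 * (N + 1) = 2 * N + 1 + 1 by ring, sum_mul_qBinomial_succ, hA,
    sum_mul_qBinomial_succ' _ hq, hB]
  ring

theorem prod_one_sub_pow_odd_sq (hq : ∀ n, qPochhammer (q ^ 2) n ≠ 0) (N : ℕ) :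
    (∏ m ∈ range N, (1 - q ^ (2 * m + 1))) ^ 2 = thetaBinomSum q N := by
  induction N with
  | zero => simp [thetaBinomSum, thetaTerm]
  | succ N ih => rw [prod_range_succ, mul_pow, ih, thetaBinomSum_succ q hq]; ring

end FiniteGauss

section ThetaTruncation

variable {R : Type*} [CommRing R] [IsDomain R]

theorem qPochhammer_X_pow_ne_zero {k : ℕ} (hk : k ≠ 0) (n : ℕ) :
    qPochhammer (X ^ k : PowerSeries R) n ≠ 0 := fun h => by
  simpa [h] using constantCoeff_qPochhammer_X_pow (R := R) hk n

theorem qBinomial_X_sq_mul_qPochhammer_smodEq {N k : ℕ} (hk : k ≤ N) :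
    qBinomial (X ^ 2 : PowerSeries R) (2 * N) k * qPochhammer (X ^ 2) N ≡ 1
      [SMOD Ideal.span {X ^ (2 * (k + 1))}] := by
  rw [qBinomial_two_mul_mul_qPochhammer _ (qPochhammer_X_pow_ne_zero two_ne_zero) hk]
  simp only [← pow_mul]
  have h₁ := prod_one_sub_X_pow_smodEq_one (R := R) (n := 2 * (k + 1)) (Ico k N)
    (fun j => 2 * (j + 1)) fun j hj => by have := (mem_Ico.1 hj).1; omega
  have h₂ := prod_one_sub_X_pow_smodEq_one (R := R) (n := 2 * (k + 1))
    (Ico (2 * N - k) (2 * N)) (fun j => 2 * (j + 1)) fun j hj => by have := (mem_Ico.1 hj).1; omega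
  simpa using h₁.mul h₂

theorem thetaTerm_mul_smodEq {N k : ℕ} (hk : k ≤ 2 * N) :
    thetaTerm (X : PowerSeries R) N k * (qBinomial (X ^ 2) (2 * N) k * qPochhammer (X ^ 2) N) ≡
      thetaTerm X N k [SMOD Ideal.span {X ^ (N + 1)}] := by
  set d := ((k : ℤ) - N).natAbs
  have key : qBinomial (X ^ 2 : PowerSeries R) (2 * N) k * qPochhammer (X ^ 2) N ≡ 1
      [SMOD Ideal.span {X ^ (2 * (N - d + 1))}] := by
    rcases le_total k N with h | h
    · simpa [show N - d = k by omega] using qBinomial_X_sq_mul_qPochhammer_smodEq (R := R) h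
    · rw [← qBinomial_symm _ (qPochhammer_X_pow_ne_zero two_ne_zero) hk]
      simpa [show N - d = 2 * N - k by omega] using
        qBinomial_X_sq_mul_qPochhammer_smodEq (R := R) (N := N) (k := 2 * N - k) (by omega)
  have hle : N + 1 ≤ d ^ 2 + 2 * (N - d + 1) := by
    have : d ≤ N := by omega
    zify [this]; nlinarith
  simpa [thetaTerm, mul_assoc] using
    (SModEq.refl ((-1) ^ (N + k))).mul (key.X_pow_mul (e := d ^ 2) |>.of_X_pow_le hle)

theorem thetaBinomSum_mul_qPochhammer_smodEq (N : ℕ) :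
    thetaBinomSum (X : PowerSeries R) N * qPochhammer (X ^ 2) N ≡
      ∑ k ∈ range (2 * N + 1), thetaTerm X N k [SMOD Ideal.span {X ^ (N + 1)}] := by
  rw [thetaBinomSum, sum_mul]
  exact SModEq.sum fun k hk => by
    simpa [mul_assoc] using thetaTerm_mul_smodEq (R := R) (by simp at hk; omega)

end ThetaTruncation

noncomputable def thetaTail : PowerSeries ℤ :=
  mk fun m => ∑ t ∈ Icc 1 m, if t ^ 2 = m then (-1) ^ t else 0

theorem sum_Icc_smodEq_thetaTail (N : ℕ) :
    ∑ t ∈ Icc 1 N, (-1) ^ t * (X : PowerSeries ℤ) ^ (t ^ 2) ≡ thetaTail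
      [SMOD Ideal.span {X ^ (N + 1)}] := by
  refine smodEq_X_pow_iff.2 fun m hm => ?_
  have hcoeff : ∀ t, coeff m ((-1) ^ t * X ^ (t ^ 2) : PowerSeries ℤ) =
      if t ^ 2 = m then (-1) ^ t else 0 := fun t => by
    simpa [eq_comm] using coeff_C_mul_X_pow ((-1 : ℤ) ^ t) (t ^ 2) m
  simp only [map_sum, hcoeff, thetaTail, coeff_mk]
  refine (sum_subset (Icc_subset_Icc_right (by omega)) fun t ht htm => ?_).symm
  have : m < t := by simp_all
  rw [if_neg (by nlinarith)]

theorem fk_one_sq : fk 1 ^ 2 = fk 2 * (1 + 2 * thetaTail) := by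
  refine eq_of_forall_smodEq_X_pow fun N => ?_
  have h₁ : fk 1 ^ 2 ≡ qPochhammer X (2 * N) ^ 2 [SMOD Ideal.span {X ^ N}] := by
    simpa using ((fk_smodEq one_ne_zero (2 * N)).of_X_pow_le (by omega)).pow 2
  have h₂ : qPochhammer (X : PowerSeries ℤ) (2 * N) ^ 2 =
      thetaBinomSum X N * qPochhammer (X ^ 2) N * qPochhammer (X ^ 2) N := by
    rw [qPochhammer_two_mul, mul_pow,
      prod_one_sub_pow_odd_sq _ (qPochhammer_X_pow_ne_zero two_ne_zero)]
    ring
  have h₃ : thetaBinomSum (X : PowerSeries ℤ) N * qPochhammer (X ^ 2) N ≡ 1 + 2 * thetaTail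
      [SMOD Ideal.span {X ^ N}] := by
    refine ((thetaBinomSum_mul_qPochhammer_smodEq N).trans ?_).of_X_pow_le N.le_succ
    rw [sum_thetaTerm]
    exact SModEq.rfl.add (SModEq.rfl.mul (sum_Icc_smodEq_thetaTail N))
  rw [mul_comm]
  exact h₁.trans (h₂ ▸ h₃.mul (fk_smodEq two_ne_zero N).symm)

theorem fk_two_sq : fk 2 ^ 2 = fk 4 * (1 + 2 * expand 2 two_ne_zero thetaTail) := by
  simpa [expand_fk, map_ofNat] using congrArg (expand 2 two_ne_zero) fk_one_sq

theorem eq_mul_of_overcubic_relation {S : Type*} [CommRing S] {P f₁ f₂ f₄ t t' : S} {i : ℕ}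
    (hi : 1 ≤ i) (h₁ : f₁ ^ 2 = f₂ * t) (h₂ : f₂ ^ 2 = f₄ * t') (ht : t ^ 2 = 1) (ht' : t' ^ 2 = 1)
    (hf₂ : IsUnit f₂) (hf₄ : IsUnit f₄)
    (h : P * f₁ ^ 2 * f₂ ^ (2 * (2 * i)) = f₂ ^ 3 * f₄ ^ (2 * i - 1)) : P = t * t' := by
  have hf₂pow : f₂ ^ (2 * (2 * i)) = f₄ ^ (2 * i) := by
    rw [pow_mul, h₂, mul_pow, pow_mul t', ht', one_pow, mul_one]
  have hf₄pow : f₄ ^ (2 * i) = f₄ * f₄ ^ (2 * i - 1) := by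
    rw [← pow_succ', Nat.sub_add_cancel (by omega)]
  have hPt : P * t = t' := (hf₂.mul (hf₄.pow (2 * i))).mul_left_cancel <| by
    rw [h₁, hf₂pow] at h
    linear_combination h + f₂ * f₄ ^ (2 * i - 1) * h₂ - f₂ * t' * hf₄pow
  linear_combination (-P) * ht + t * hPt

theorem one_add_two_mul_sq {S : Type*} [CommRing S] (h4 : (4 : S) = 0) (a : S) :
    (1 + 2 * a) ^ 2 = 1 := by
  linear_combination (a + a ^ 2) * h4

theorem coeff_thetaTail_eq_zero {m : ℕ} (hm : ∀ t, t ^ 2 ≠ m) : coeff m thetaTail = 0 := by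
  simp [thetaTail, hm]

theorem coeff_expand_thetaTail_eq_zero {m : ℕ} (hm : ∀ t, 2 * t ^ 2 ≠ m) :
    coeff m (expand 2 two_ne_zero thetaTail) = 0 := by
  obtain ⟨j, rfl⟩ | hodd := em (2 ∣ m)
  · rw [coeff_expand_mul, coeff_thetaTail_eq_zero fun t ht => hm t (by rw [ht])]
  · exact coeff_expand_of_not_dvd _ _ _ hodd

theorem four_dvd_coeff_theta_mul_theta {m : ℕ} (hm₀ : m ≠ 0) (hm₁ : ∀ t, t ^ 2 ≠ m)
    (hm₂ : ∀ t, 2 * t ^ 2 ≠ m) :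
    (4 : ℤ) ∣ coeff m ((1 + 2 * thetaTail) * (1 + 2 * expand 2 two_ne_zero thetaTail)) := by
  have hexp : (1 + 2 * thetaTail) * (1 + 2 * expand 2 two_ne_zero thetaTail) =
      1 + C 2 * (thetaTail + expand 2 two_ne_zero thetaTail) +
        C 4 * (thetaTail * expand 2 two_ne_zero thetaTail) := by
    simp only [map_ofNat]; ring
  rw [hexp, map_add, map_add, coeff_C_mul, coeff_C_mul, coeff_one, if_neg hm₀, map_add,
    coeff_thetaTail_eq_zero hm₁, coeff_expand_thetaTail_eq_zero hm₂]
  simp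

theorem sq_ne_two_pow_mul_and_two_mul_sq_ne (α n t : ℕ) :
    t ^ 2 ≠ 2 ^ α * (4 * n + 3) ∧ 2 * t ^ 2 ≠ 2 ^ α * (4 * n + 3) := by
  induction α generalizing t with
  | zero =>
    refine ⟨fun h => ?_, by omega⟩
    have : t ^ 2 % 4 = 0 ∨ t ^ 2 % 4 = 1 := by
      rcases Nat.even_or_odd t with ⟨s, rfl⟩ | ⟨s, rfl⟩ <;> ring_nf <;> omega
    omega
  | succ α ih =>
    rw [show 2 ^ (α + 1) * (4 * n + 3) = 2 * (2 ^ α * (4 * n + 3)) by ring]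
    refine ⟨fun h => ?_, fun h => (ih t).1 (by linarith)⟩
    obtain ⟨s, rfl⟩ : Even t := by
      rw [← Nat.even_pow' two_ne_zero, h]; exact even_two_mul _
    exact (ih s).2 (by ring_nf at h; linarith)

theorem map_genOvercubic_eq {i : ℕ} (hi : 1 ≤ i) {ab : ℕ → ℕ}
    (hab : IsGenOvercubic (2 * i) ab) :
    map (Int.castRingHom (ZMod 4)) (mk fun n => (ab n : ℤ)) =
      map (Int.castRingHom (ZMod 4))
        ((1 + 2 * thetaTail) * (1 + 2 * expand 2 two_ne_zero thetaTail)) := by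
  have h4 : (4 : PowerSeries (ZMod 4)) = 0 := by
    rw [← map_ofNat (C (R := ZMod 4)) 4, show (4 : ZMod 4) = 0 by decide, map_zero]
  have h₁ := congrArg (map (Int.castRingHom (ZMod 4))) fk_one_sq
  have h₂ := congrArg (map (Int.castRingHom (ZMod 4))) fk_two_sq
  have h := congrArg (map (Int.castRingHom (ZMod 4))) hab
  simp only [map_mul, map_pow, map_add, map_one, map_ofNat] at h₁ h₂ h ⊢
  exact eq_mul_of_overcubic_relation hi h₁ h₂ (one_add_two_mul_sq h4 _) (one_add_two_mul_sq h4 _)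
    ((isUnit_fk two_ne_zero).map _) ((isUnit_fk four_ne_zero).map _) h

theorem stmt_8 (i : ℕ) (hi : 1 ≤ i) (ab : ℕ → ℕ) (hab : IsGenOvercubic (2 * i) ab)
    (n α : ℕ) :
    ab (2 ^ α * (4 * n + 3)) % 4 = 0 := by
  have h := congrArg (coeff (2 ^ α * (4 * n + 3))) (map_genOvercubic_eq hi hab)
  rw [coeff_map, coeff_map, coeff_mk, eq_intCast, eq_intCast, Int.cast_natCast,
    (ZMod.intCast_zmod_eq_zero_iff_dvd _ 4).2 (four_dvd_coeff_theta_mul_theta (by positivity)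
      (fun t => (sq_ne_two_pow_mul_and_two_mul_sq_ne α n t).1)
      (fun t => (sq_ne_two_pow_mul_and_two_mul_sq_ne α n t).2))] at h
  exact Nat.mod_eq_zero_of_dvd ((ZMod.natCast_eq_zero_iff _ 4).1 h)
end
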